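/- Let $g : \mathbb{Z} \to \mathbb{R}$ and suppose $u = g \circ \phi$ is $p$-harmonic ($\Delta_p u(x) = 0$ for all $x \in G_k$). Then there exists a constant $C \in \mathbb{R}$ such that for every $n \in \mathbb{Z}$, $|g(n+1) - g(n)|^{p-2}\,(g(n+1) - g(n)) = C \cdot \varrho_n^{\,p-1}$. -/

import Mathlib

/-- The group representation `G_k` of the Cayley tree of order `k`:
the free product of `k+1` copies of the cyclic group of order two. -/
abbrev G (k : ℕ) : Type := Monoid.CoprodI (fun _ : Fin (k + 1) => Multiplicative (ZMod 2))

/-- The generators `a_0, ..., a_k` of `G_k`. -/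
def gen (k : ℕ) (s : Fin (k + 1)) : G k :=
  Monoid.CoprodI.of (i := s) (Multiplicative.ofAdd (1 : ZMod 2))

/-- `φ_p(t) = |t|^(p-2) t` (real powers). -/
noncomputable def phiP (p t : ℝ) : ℝ := |t| ^ (p - 2) * t

/-- The discrete `p`-Laplacian on the Cayley tree with resistances `r`:
`Δ_p u (x) = ∑_{s=0}^{k} φ_p ((u (x a_s) - u x) / r (x, x a_s))`. -/
noncomputable def pLap (k : ℕ) (p : ℝ) (r : G k × G k → ℝ) (u : G k → ℝ) (x : G k) : ℝ :=
  ∑ s : Fin (k + 1), phiP p ((u (x * gen k s) - u x) / r (x, x * gen k s))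

/-- A function `u : G_k → ℝ` is `H`-periodic if `u (y x) = u x` for all `y ∈ H`, `x ∈ G_k`. -/
def IsPeriodic (k : ℕ) (H : Subgroup (G k)) (u : G k → ℝ) : Prop :=
  ∀ y ∈ H, ∀ x : G k, u (y * x) = u x

/-- The coset index `φ(x) = ρ(x)(0)` associated to a permutation action `ρ` of `G_k` on `ℤ`. -/
def cosetIdx {k : ℕ} (ρ : G k →* Equiv.Perm ℤ) (x : G k) : ℤ := ρ x 0

/-! Each `ρ x` is an isometry of `ℤ`, being a product of the reflections `ρ a_i`, `ρ a_j` and the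
identity. Hence of the two neighbours `x a_i`, `x a_j` one has index `φ x + 1` and the other
`φ x - 1`, while all other neighbours keep the index `φ x`. So `Δ_p u (x)` is the difference of the
edge fluxes `φ_p ((g (n + 1) - g n) / ϱ n)` at `n = φ x` and `n = φ x - 1`; as `φ` is onto, the
flux is constant, and `φ_p (t / c) = φ_p t / c ^ (p - 1)` turns this into the claim. -/

lemma phiP_zero (p : ℝ) : phiP p 0 = 0 := by simp [phiP]

lemma phiP_neg (p t : ℝ) : phiP p (-t) = -phiP p t := by
  simp only [phiP, abs_neg]; ring

lemma phiP_div_of_pos (p t : ℝ) {c : ℝ} (hc : 0 < c) :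
    phiP p (t / c) = phiP p t / c ^ (p - 1) := by
  have hpow : c ^ (p - 1) = c ^ (p - 2) * c := by
    rw [show p - 1 = (p - 2) + 1 by ring, Real.rpow_add_one hc.ne']
  rw [phiP, phiP, abs_div, abs_of_pos hc, Real.div_rpow (abs_nonneg t) hc.le, hpow]
  field_simp

lemma Int.isometry_iff {f : ℤ → ℤ} : Isometry f ↔ ∀ m n, |f m - f n| = |m - n| := by
  simp only [isometry_iff_dist_eq, Int.dist_eq', Int.cast_inj]

lemma Int.isometry_sub_left (c : ℤ) : Isometry (c - ·) :=
  Int.isometry_iff.2 fun m n ↦ by rw [sub_sub_sub_cancel_left, abs_sub_comm]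

lemma Int.isometry_neighbours {f : ℤ → ℤ} (hf : Isometry f) :
    (f 1 = f 0 + 1 ∧ f (-1) = f 0 - 1) ∨ (f 1 = f 0 - 1 ∧ f (-1) = f 0 + 1) := by
  have h₁ := Int.isometry_iff.1 hf 1 0
  have h₂ := Int.isometry_iff.1 hf (-1) 0
  have h₃ := Int.isometry_iff.1 hf 1 (-1)
  norm_num [abs_eq] at h₁ h₂ h₃
  omega

lemma Monoid.CoprodI.isometry_of_forall_of {ι : Type*} {M : ι → Type*} [∀ i, Monoid (M i)]
    (ρ : Monoid.CoprodI M →* Equiv.Perm ℤ) (h : ∀ i (m : M i), Isometry (ρ (of m)))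
    (x : Monoid.CoprodI M) : Isometry (ρ x) := by
  induction x using Monoid.CoprodI.induction_on with
  | one => simpa using isometry_id
  | of i m => exact h i m
  | mul x y hx hy => simpa using hx.comp hy

lemma isometry_of_isometry_gen {k : ℕ} (ρ : G k →* Equiv.Perm ℤ)
    (h : ∀ s, Isometry (ρ (gen k s))) (x : G k) : Isometry (ρ x) := by
  refine Monoid.CoprodI.isometry_of_forall_of ρ (fun s m ↦ ?_) x
  obtain rfl | rfl : m = 1 ∨ m = Multiplicative.ofAdd 1 := by revert m; decide
  · simpa using isometry_id
  · exact h s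

lemma cosetIdx_mul {k : ℕ} (ρ : G k →* Equiv.Perm ℤ) (x y : G k) :
    cosetIdx ρ (x * y) = ρ x (cosetIdx ρ y) := by
  simp [cosetIdx]

lemma cosetIdx_surjective {k : ℕ} {ρ : G k →* Equiv.Perm ℤ} (hiso : ∀ x, Isometry (ρ x))
    {i j : Fin (k + 1)} (hi : cosetIdx ρ (gen k i) = 1) (hj : cosetIdx ρ (gen k j) = -1) :
    Function.Surjective (cosetIdx ρ) := by
  have step : ∀ x, (∃ y, cosetIdx ρ y = cosetIdx ρ x + 1) ∧
      ∃ y, cosetIdx ρ y = cosetIdx ρ x - 1 := by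
    intro x
    have hxi := cosetIdx_mul ρ x (gen k i)
    have hxj := cosetIdx_mul ρ x (gen k j)
    rw [hi] at hxi
    rw [hj] at hxj
    rcases Int.isometry_neighbours (hiso x) with ⟨h₁, h₂⟩ | ⟨h₁, h₂⟩
    · exact ⟨⟨_, hxi.trans h₁⟩, ⟨_, hxj.trans h₂⟩⟩
    · exact ⟨⟨_, hxj.trans h₂⟩, ⟨_, hxi.trans h₁⟩⟩
  intro n
  induction n using Int.induction_on with
  | zero => exact ⟨1, by simp [cosetIdx]⟩
  | succ n ih =>
    obtain ⟨x, hx⟩ := ih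
    obtain ⟨y, hy⟩ := (step x).1
    exact ⟨y, by rw [hy, hx]⟩
  | pred n ih =>
    obtain ⟨x, hx⟩ := ih
    obtain ⟨y, hy⟩ := (step x).2
    exact ⟨y, by rw [hy, hx]⟩

noncomputable def edgeFlux (p : ℝ) (ϱ g : ℤ → ℝ) (n : ℤ) : ℝ := phiP p ((g (n + 1) - g n) / ϱ n)

section EdgeTerms

variable {k : ℕ} {ρ : G k →* Equiv.Perm ℤ} {r : G k × G k → ℝ} {ϱ : ℤ → ℝ}
  (hrϱ : ∀ x y : G k, cosetIdx ρ y = cosetIdx ρ x + 1 → r (x, y) = ϱ (cosetIdx ρ x))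
  (p : ℝ) (g : ℤ → ℝ) {x y : G k}
include hrϱ

lemma phiP_edge_of_cosetIdx_eq_add_one (h : cosetIdx ρ y = cosetIdx ρ x + 1) :
    phiP p ((g (cosetIdx ρ y) - g (cosetIdx ρ x)) / r (x, y)) = edgeFlux p ϱ g (cosetIdx ρ x) := by
  rw [hrϱ x y h, h, edgeFlux]

lemma phiP_edge_of_cosetIdx_eq_sub_one (hr_symm : ∀ x y : G k, r (x, y) = r (y, x))
    (h : cosetIdx ρ y = cosetIdx ρ x - 1) :
    phiP p ((g (cosetIdx ρ y) - g (cosetIdx ρ x)) / r (x, y)) =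
      -edgeFlux p ϱ g (cosetIdx ρ x - 1) := by
  have hx : cosetIdx ρ x = cosetIdx ρ y + 1 := by omega
  rw [hr_symm, hrϱ y x hx, edgeFlux, ← h, ← hx, ← phiP_neg, ← neg_div, neg_sub]

end EdgeTerms

lemma pLap_comp_cosetIdx {k : ℕ} (p : ℝ) {r : G k × G k → ℝ}
    (hr_symm : ∀ x y : G k, r (x, y) = r (y, x)) {i j : Fin (k + 1)} (hij : i ≠ j)
    {ρ : G k →* Equiv.Perm ℤ} (hiso : ∀ x, Isometry (ρ x))
    (hi : cosetIdx ρ (gen k i) = 1) (hj : cosetIdx ρ (gen k j) = -1)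
    (hρs : ∀ s : Fin (k + 1), s ≠ i → s ≠ j → ρ (gen k s) = 1) {ϱ : ℤ → ℝ}
    (hrϱ : ∀ x y : G k, cosetIdx ρ y = cosetIdx ρ x + 1 → r (x, y) = ϱ (cosetIdx ρ x))
    (g : ℤ → ℝ) (x : G k) :
    pLap k p r (fun x => g (cosetIdx ρ x)) x =
      edgeFlux p ϱ g (cosetIdx ρ x) - edgeFlux p ϱ g (cosetIdx ρ x - 1) := by
  rw [pLap, Fintype.sum_eq_add i j hij fun s hs ↦ ?_]
  · have hxi := cosetIdx_mul ρ x (gen k i)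
    have hxj := cosetIdx_mul ρ x (gen k j)
    rw [hi] at hxi
    rw [hj] at hxj
    rcases Int.isometry_neighbours (hiso x) with ⟨h₁, h₂⟩ | ⟨h₁, h₂⟩
    · rw [phiP_edge_of_cosetIdx_eq_add_one hrϱ p g (hxi.trans h₁),
        phiP_edge_of_cosetIdx_eq_sub_one hrϱ p g hr_symm (hxj.trans h₂)]
      ring
    · rw [phiP_edge_of_cosetIdx_eq_sub_one hrϱ p g hr_symm (hxi.trans h₁),
        phiP_edge_of_cosetIdx_eq_add_one hrϱ p g (hxj.trans h₂)]
      ring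
  · have hfix : cosetIdx ρ (x * gen k s) = cosetIdx ρ x := by
      simp [cosetIdx, hρs s hs.1 hs.2]
    rw [hfix, sub_self, zero_div, phiP_zero]

theorem stmt10_general (k : ℕ) (p : ℝ)
    (r : G k × G k → ℝ) (hr_symm : ∀ x y : G k, r (x, y) = r (y, x))
    (i j : Fin (k + 1)) (hij : i ≠ j)
    (ρ : G k →* Equiv.Perm ℤ)
    (hρi : ∀ n : ℤ, ρ (gen k i) n = 1 - n)
    (hρj : ∀ n : ℤ, ρ (gen k j) n = -1 - n)
    (hρs : ∀ s : Fin (k + 1), s ≠ i → s ≠ j → ρ (gen k s) = 1)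
    (ϱ : ℤ → ℝ) (hϱ_pos : ∀ n : ℤ, 0 < ϱ n)
    (hrϱ : ∀ x y : G k, cosetIdx ρ y = cosetIdx ρ x + 1 → r (x, y) = ϱ (cosetIdx ρ x))
    (g : ℤ → ℝ) (hharm : ∀ x : G k, pLap k p r (fun x => g (cosetIdx ρ x)) x = 0) :
    ∃ C : ℝ, ∀ n : ℤ,
      |g (n + 1) - g n| ^ (p - 2) * (g (n + 1) - g n) = C * ϱ n ^ (p - 1) := by
  have hi : cosetIdx ρ (gen k i) = 1 := by simp [cosetIdx, hρi]
  have hj : cosetIdx ρ (gen k j) = -1 := by simp [cosetIdx, hρj]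
  have hiso : ∀ x, Isometry (ρ x) := isometry_of_isometry_gen ρ fun s ↦ by
    by_cases hsi : s = i
    · rw [hsi, show ⇑(ρ (gen k i)) = (1 - ·) from funext hρi]
      exact Int.isometry_sub_left 1
    by_cases hsj : s = j
    · rw [hsj, show ⇑(ρ (gen k j)) = (-1 - ·) from funext hρj]
      exact Int.isometry_sub_left (-1)
    rw [hρs s hsi hsj]
    exact isometry_id
  have hper : Function.Periodic (edgeFlux p ϱ g) 1 := fun n ↦ by
    obtain ⟨x, hx⟩ := cosetIdx_surjective hiso hi hj (n + 1)
    have hflux := pLap_comp_cosetIdx p hr_symm hij hiso hi hj hρs hrϱ g x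
    rw [hharm x, hx, add_sub_cancel_right] at hflux
    linarith
  refine ⟨edgeFlux p ϱ g 0, fun n ↦ ?_⟩
  have hpow := Real.rpow_pos_of_pos (hϱ_pos n) (p - 1)
  have hconst : edgeFlux p ϱ g n = edgeFlux p ϱ g 0 := by simpa using hper.int_mul_eq n
  rw [← hconst, edgeFlux, phiP_div_of_pos _ _ (hϱ_pos n),
    div_mul_cancel₀ _ hpow.ne', phiP]

theorem stmt10 (k : ℕ) (hk : 1 ≤ k) (p : ℝ) (hp1 : 1 < p)
    (r : G k × G k → ℝ) (hr_symm : ∀ x y : G k, r (x, y) = r (y, x)) (hr_pos : ∀ x y : G k, 0 < r (x, y))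
    (i j : Fin (k + 1)) (hij : i ≠ j)
    (ρ : G k →* Equiv.Perm ℤ)
    (hρi : ∀ n : ℤ, ρ (gen k i) n = 1 - n)
    (hρj : ∀ n : ℤ, ρ (gen k j) n = -1 - n)
    (hρs : ∀ s : Fin (k + 1), s ≠ i → s ≠ j → ρ (gen k s) = 1)
    (ϱ : ℤ → ℝ) (hϱ_pos : ∀ n : ℤ, 0 < ϱ n)
    (hrϱ : ∀ x y : G k, cosetIdx ρ y = cosetIdx ρ x + 1 → r (x, y) = ϱ (cosetIdx ρ x))
    (g : ℤ → ℝ) (hharm : ∀ x : G k, pLap k p r (fun x => g (cosetIdx ρ x)) x = 0) :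
    ∃ C : ℝ, ∀ n : ℤ,
      |g (n + 1) - g n| ^ (p - 2) * (g (n + 1) - g n) = C * ϱ n ^ (p - 1) :=
  stmt10_general k p r hr_symm i j hij ρ hρi hρj hρs ϱ hϱ_pos hrϱ g hharm
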